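/- For integers 1 ≤ m < n with m ≥ 2, deleting one vertex of the smaller part of K_{m,n} decreases the strong domination number from m to m − 1; hence st_{γ_st}(K_{m,n}) = 1. -/

import Mathlib

open SimpleGraph

/-- `D` is a strong dominating set of `G`: every vertex outside `D` has a neighbor
in `D` whose degree is at least its own. -/
def IsStrongDominating {V : Type*} (G : SimpleGraph V) (D : Set V) : Prop :=
  ∀ v ∉ D, ∃ u ∈ D, G.Adj v u ∧ (G.neighborSet v).ncard ≤ (G.neighborSet u).ncard

/-- The strong domination number. -/
noncomputable def gammaSt {V : Type*} (G : SimpleGraph V) : ℕ :=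
  sInf {n | ∃ D : Set V, D.Finite ∧ IsStrongDominating G D ∧ D.ncard = n}

/-- The stability of the strong domination number: the minimum size of a vertex set
whose removal changes the strong domination number. -/
noncomputable def stGammaSt {V : Type*} (G : SimpleGraph V) : ℕ :=
  sInf {n | ∃ S : Set V, S.Finite ∧ S.ncard = n ∧ gammaSt (G.induce Sᶜ) ≠ gammaSt G}

/-- The join of two graphs. -/
def joinG {V W : Type*} (G : SimpleGraph V) (H : SimpleGraph W) : SimpleGraph (V ⊕ W) :=
  SimpleGraph.fromRel (fun x y =>
    match x, y with
    | Sum.inl a, Sum.inl b => G.Adj a b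
    | Sum.inr a, Sum.inr b => H.Adj a b
    | _, _ => True)

/-- `n` disjoint copies of `K₂`. -/
def nK2 (n : ℕ) : SimpleGraph (Fin n × Fin 2) where
  Adj x y := x.1 = y.1 ∧ x.2 ≠ y.2
  symm := ⟨fun x y h => ⟨h.1.symm, h.2.symm⟩⟩
  loopless := ⟨fun x h => h.2 rfl⟩

/-! In `K_{m,n}` with `m < n` every vertex of the smaller part has degree `n`, more than the
degree `m` of every vertex of the larger part. So the smaller part is strongly dominating, and
every strong dominating set contains it, since a vertex of the smaller part could only be
dominated by a neighbour of smaller degree. Hence `γ_st(K_{m,n}) = m` for `0 < m < n`; deleting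
a vertex of the smaller part leaves `K_{m-1,n}`, where `γ_st = m - 1`, while deleting nothing
changes nothing, so `st_{γ_st}(K_{m,n}) = 1`. -/

section Iso

variable {V W : Type*} {G : SimpleGraph V} {H : SimpleGraph W}

lemma SimpleGraph.Iso.ncard_neighborSet (e : G ≃g H) (v : V) :
    (H.neighborSet (e v)).ncard = (G.neighborSet v).ncard := by
  rw [← Nat.card_coe_set_eq, ← Nat.card_coe_set_eq]
  exact Nat.card_congr (e.mapNeighborSet v).symm

lemma IsStrongDominating.image (e : G ≃g H) {D : Set V} (hD : IsStrongDominating G D) :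
    IsStrongDominating H (e '' D) := by
  intro w hw
  have hw' : e.symm w ∉ D := fun h => hw ⟨e.symm w, h, e.apply_symm_apply w⟩
  obtain ⟨u, hu, hadj, hdeg⟩ := hD (e.symm w) hw'
  refine ⟨e u, Set.mem_image_of_mem e hu, by simpa using e.map_adj_iff.mpr hadj, ?_⟩
  rw [e.ncard_neighborSet, ← e.apply_symm_apply w, e.ncard_neighborSet]
  exact hdeg

lemma gammaSt_congr (e : G ≃g H) : gammaSt G = gammaSt H := by
  unfold gammaSt
  congr 1
  ext k
  constructor
  · rintro ⟨D, hfin, hD, rfl⟩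
    exact ⟨e '' D, hfin.image e, hD.image e, Set.ncard_image_of_injective D e.injective⟩
  · rintro ⟨D, hfin, hD, rfl⟩
    exact ⟨e.symm '' D, hfin.image e.symm, hD.image e.symm,
      Set.ncard_image_of_injective D e.symm.injective⟩

end Iso

lemma stGammaSt_eq_one_of_gammaSt_induce_ne {V : Type*} {G : SimpleGraph V} (v : V)
    (h : gammaSt (G.induce {v}ᶜ) ≠ gammaSt G) : stGammaSt G = 1 := by
  have hmem : 1 ∈ {k | ∃ S : Set V, S.Finite ∧ S.ncard = k ∧
      gammaSt (G.induce Sᶜ) ≠ gammaSt G} :=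
    ⟨{v}, Set.finite_singleton v, Set.ncard_singleton v, h⟩
  refine le_antisymm (Nat.sInf_le hmem) (le_csInf ⟨1, hmem⟩ ?_)
  rintro k ⟨S, hfin, rfl, hS⟩
  refine Nat.one_le_iff_ne_zero.mpr fun h0 => hS ?_
  rw [(Set.ncard_eq_zero hfin).mp h0, Set.compl_empty]
  exact gammaSt_congr (induceUnivIso G)

section CompleteBipartite

variable {α β : Type*}

lemma completeBipartiteGraph_neighborSet_inl (a : α) :
    (completeBipartiteGraph α β).neighborSet (Sum.inl a) = Set.range Sum.inr := by
  ext (_ | _) <;> simp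

lemma completeBipartiteGraph_neighborSet_inr (b : β) :
    (completeBipartiteGraph α β).neighborSet (Sum.inr b) = Set.range Sum.inl := by
  ext (_ | _) <;> simp

lemma ncard_completeBipartiteGraph_neighborSet_inl (a : α) :
    ((completeBipartiteGraph α β).neighborSet (Sum.inl a)).ncard = Nat.card β := by
  rw [completeBipartiteGraph_neighborSet_inl, Set.ncard_range_of_injective Sum.inr_injective]

lemma ncard_completeBipartiteGraph_neighborSet_inr (b : β) :
    ((completeBipartiteGraph α β).neighborSet (Sum.inr b)).ncard = Nat.card α := by
  rw [completeBipartiteGraph_neighborSet_inr, Set.ncard_range_of_injective Sum.inl_injective]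

lemma isStrongDominating_range_inl [Nonempty α] (h : Nat.card α ≤ Nat.card β) :
    IsStrongDominating (completeBipartiteGraph α β) (Set.range Sum.inl) := by
  rintro (a | b) hv
  · exact absurd ⟨a, rfl⟩ hv
  · obtain ⟨a⟩ := ‹Nonempty α›
    refine ⟨Sum.inl a, ⟨a, rfl⟩, by simp, ?_⟩
    rwa [ncard_completeBipartiteGraph_neighborSet_inl, ncard_completeBipartiteGraph_neighborSet_inr]

lemma IsStrongDominating.range_inl_subset {D : Set (α ⊕ β)}
    (hD : IsStrongDominating (completeBipartiteGraph α β) D) (h : Nat.card α < Nat.card β) :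
    Set.range Sum.inl ⊆ D := by
  rintro _ ⟨a, rfl⟩
  by_contra ha
  obtain ⟨_ | b, -, hadj, hdeg⟩ := hD _ ha
  · simp at hadj
  · rw [ncard_completeBipartiteGraph_neighborSet_inl,
      ncard_completeBipartiteGraph_neighborSet_inr] at hdeg
    omega

lemma gammaSt_completeBipartiteGraph [Finite α] [Nonempty α] (h : Nat.card α < Nat.card β) :
    gammaSt (completeBipartiteGraph α β) = Nat.card α := by
  have hmem : Nat.card α ∈ {k | ∃ D : Set (α ⊕ β), D.Finite ∧
      IsStrongDominating (completeBipartiteGraph α β) D ∧ D.ncard = k} :=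
    ⟨Set.range Sum.inl, Set.finite_range _, isStrongDominating_range_inl h.le,
      Set.ncard_range_of_injective Sum.inl_injective⟩
  refine le_antisymm (Nat.sInf_le hmem) (le_csInf ⟨_, hmem⟩ ?_)
  rintro k ⟨D, hfin, hD, rfl⟩
  calc Nat.card α = (Set.range (Sum.inl : α → α ⊕ β)).ncard :=
        (Set.ncard_range_of_injective Sum.inl_injective).symm
    _ ≤ D.ncard := Set.ncard_le_ncard (hD.range_inl_subset h) hfin

def completeBipartiteGraph.induceComplInlIso (a : α) :
    (completeBipartiteGraph α β).induce {Sum.inl a}ᶜ ≃g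
      completeBipartiteGraph {x : α // x ≠ a} β where
  toFun
    | ⟨Sum.inl x, hx⟩ => Sum.inl ⟨x, fun h => hx (by simp [h])⟩
    | ⟨Sum.inr b, _⟩ => Sum.inr b
  invFun
    | Sum.inl ⟨x, hx⟩ => ⟨Sum.inl x, by simp [hx]⟩
    | Sum.inr b => ⟨Sum.inr b, by simp⟩
  left_inv := by rintro ⟨_ | _, _⟩ <;> rfl
  right_inv := by rintro (⟨_, _⟩ | _) <;> rfl
  map_rel_iff' := by rintro ⟨_ | _, _⟩ ⟨_ | _, _⟩ <;> simp

end CompleteBipartite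

theorem stGammaSt_completeBipartite_one (m n : ℕ) (hm : 2 ≤ m) (hmn : m < n) :
    ∀ u : Fin m,
      gammaSt ((completeBipartiteGraph (Fin m) (Fin n)).induce {Sum.inl u}ᶜ) = m - 1 ∧
      stGammaSt (completeBipartiteGraph (Fin m) (Fin n)) = 1 := by
  intro u
  have hcard : Nat.card {x : Fin m // x ≠ u} = m - 1 := by
    rw [Nat.card_eq_fintype_card, Fintype.card_subtype_compl, Fintype.card_fin,
      Fintype.card_unique]
  have : Nonempty {x : Fin m // x ≠ u} := (Nat.card_pos_iff.mp (by omega)).1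
  have hdel : gammaSt ((completeBipartiteGraph (Fin m) (Fin n)).induce {Sum.inl u}ᶜ) = m - 1 := by
    rw [gammaSt_congr (completeBipartiteGraph.induceComplInlIso u),
      gammaSt_completeBipartiteGraph (by rw [hcard, Nat.card_fin]; omega), hcard]
  have hG : gammaSt (completeBipartiteGraph (Fin m) (Fin n)) = m := by
    have : Nonempty (Fin m) := ⟨u⟩
    rw [gammaSt_completeBipartiteGraph (by simpa using hmn), Nat.card_fin]
  exact ⟨hdel, stGammaSt_eq_one_of_gammaSt_induce_ne (Sum.inl u) (by omega)⟩
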